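/- arXiv:quant-ph/0608016 — 5 statements merged into one kernel-verified Lean document; each statement's English description precedes it below -/
import Mathlib

section
/- A graph G with at least one edge has a rank-1 quantum 2-colouring if and only if G is 2-colourable (bipartite in the proper-colouring sense). -/
open Matrix

/-- A rank-1 quantum `c`-colouring of `G`. -/
def IsQC1 {V : Type*} (G : SimpleGraph V) (c : ℕ)
    (U : V → Matrix.unitaryGroup (Fin c) ℂ) : Prop :=
  ∀ v w, G.Adj v w → ∀ α : Fin c,
    (((U v : Matrix (Fin c) (Fin c) ℂ))ᴴ * (U w : Matrix (Fin c) (Fin c) ℂ)) α α = 0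

namespace QC1Aux

/-- antidiagonal unitary shape -/
def Anti (M : Matrix (Fin 2) (Fin 2) ℂ) : Prop :=
  M 0 0 = 0 ∧ M 1 1 = 0 ∧ M 0 1 ≠ 0 ∧ M 1 0 ≠ 0

/-- diagonal unitary shape -/
def Diag (M : Matrix (Fin 2) (Fin 2) ℂ) : Prop :=
  M 0 1 = 0 ∧ M 1 0 = 0 ∧ M 0 0 ≠ 0 ∧ M 1 1 ≠ 0

lemma mul2 (M N : Matrix (Fin 2) (Fin 2) ℂ) (i j : Fin 2) :
    (M * N) i j = M i 0 * N 0 j + M i 1 * N 1 j := by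
  simp [Matrix.mul_apply, Fin.sum_univ_two]

lemma anti_mul_anti {M N : Matrix (Fin 2) (Fin 2) ℂ} (hM : Anti M) (hN : Anti N) :
    Diag (M * N) := by
  obtain ⟨m00, m11, m01, m10⟩ := hM
  obtain ⟨n00, n11, n01, n10⟩ := hN
  refine ⟨?_, ?_, ?_, ?_⟩ <;> simp [mul2, m00, m11, n00, n11, m01, m10, n01, n10]

lemma anti_mul_diag {M N : Matrix (Fin 2) (Fin 2) ℂ} (hM : Anti M) (hN : Diag N) :
    Anti (M * N) := by
  obtain ⟨m00, m11, m01, m10⟩ := hM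
  obtain ⟨n01, n10, n00, n11⟩ := hN
  refine ⟨?_, ?_, ?_, ?_⟩ <;> simp [mul2, m00, m11, n00, n11, m01, m10, n01, n10]

lemma diag_mul_diag {M N : Matrix (Fin 2) (Fin 2) ℂ} (hM : Diag M) (hN : Diag N) :
    Diag (M * N) := by
  obtain ⟨m01, m10, m00, m11⟩ := hM
  obtain ⟨n01, n10, n00, n11⟩ := hN
  refine ⟨?_, ?_, ?_, ?_⟩ <;> simp [mul2, m00, m11, n00, n11, m01, m10, n01, n10]

lemma anti_conjTranspose {M : Matrix (Fin 2) (Fin 2) ℂ} (hM : Anti M) : Anti Mᴴ := by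
  obtain ⟨m00, m11, m01, m10⟩ := hM
  refine ⟨?_, ?_, ?_, ?_⟩ <;> simp [Matrix.conjTranspose_apply, m00, m11, m01, m10]

lemma diag_conjTranspose {M : Matrix (Fin 2) (Fin 2) ℂ} (hM : Diag M) : Diag Mᴴ := by
  obtain ⟨m01, m10, m00, m11⟩ := hM
  refine ⟨?_, ?_, ?_, ?_⟩ <;> simp [Matrix.conjTranspose_apply, m00, m11, m01, m10]

lemma diag_one : Diag (1 : Matrix (Fin 2) (Fin 2) ℂ) := by
  refine ⟨?_, ?_, ?_, ?_⟩ <;> simp [Matrix.one_apply]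

/-- a 2×2 unitary with vanishing (0,0) entry is antidiagonal -/
lemma anti_of_unitary_of_zero {M : Matrix (Fin 2) (Fin 2) ℂ}
    (hM : M ∈ Matrix.unitaryGroup (Fin 2) ℂ) (h0 : M 0 0 = 0) : Anti M := by
  have h1 : Mᴴ * M = 1 := by
    have := Matrix.mem_unitaryGroup_iff'.mp hM
    rwa [Matrix.star_eq_conjTranspose] at this
  have h2 : M * Mᴴ = 1 := by
    have := Matrix.mem_unitaryGroup_iff.mp hM
    rwa [Matrix.star_eq_conjTranspose] at this
  have hc00 := congrFun (congrFun h1 0) 0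
  have hr00 := congrFun (congrFun h2 0) 0
  have hc01 := congrFun (congrFun h1 0) 1
  simp [mul2, Matrix.conjTranspose_apply, Matrix.one_apply, h0] at hc00 hr00 hc01
  -- hc00 : conj (M 1 0) * M 1 0 = 1, hr00 : M 0 1 * conj (M 0 1) = 1
  have h10 : M 1 0 ≠ 0 := by
    intro h; rw [h] at hc00; simp at hc00
  have h01 : M 0 1 ≠ 0 := by
    intro h; rw [h] at hr00; simp at hr00
  have h11 : M 1 1 = 0 := by
    -- hc01 : conj (M 1 0) * M 1 1 = 0
    rcases hc01 with h | h
    · exact absurd h h10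
    · exact h
  exact ⟨h0, h11, h01, h10⟩

end QC1Aux

open QC1Aux in
/-- A graph with at least one edge has a rank-1 quantum 2-colouring
iff it is (classically) 2-colourable. -/
theorem stmt1 {V : Type*} (G : SimpleGraph V) (hE : ∃ v w, G.Adj v w) :
    (∃ U : V → Matrix.unitaryGroup (Fin 2) ℂ, IsQC1 G 2 U) ↔ G.Colorable 2 := by
  constructor
  · rintro ⟨U, hU⟩
    classical
    set A : V → V → Matrix (Fin 2) (Fin 2) ℂ :=
      fun v w => ((U v : Matrix (Fin 2) (Fin 2) ℂ))ᴴ * (U w : Matrix (Fin 2) (Fin 2) ℂ)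
      with hA
    have hAmem : ∀ v w, A v w ∈ Matrix.unitaryGroup (Fin 2) ℂ := by
      intro v w
      rw [hA]
      simp only [← Matrix.star_eq_conjTranspose]
      exact mul_mem (Unitary.star_mem (U v).2) (U w).2
    have hAself : ∀ v, A v v = 1 := by
      intro v
      have := Matrix.mem_unitaryGroup_iff'.mp (U v).2
      rwa [Matrix.star_eq_conjTranspose] at this
    have hAedge : ∀ {v w}, G.Adj v w → Anti (A v w) := by
      intro v w h
      exact anti_of_unitary_of_zero (hAmem v w) (hU v w h 0)
    have hAtrans : ∀ u v w, A u v * A v w = A u w := by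
      intro u v w
      have hv : (U v : Matrix (Fin 2) (Fin 2) ℂ) * (U v : Matrix (Fin 2) (Fin 2) ℂ)ᴴ = 1 := by
        have := Matrix.mem_unitaryGroup_iff.mp (U v).2
        rwa [Matrix.star_eq_conjTranspose] at this
      rw [hA]
      rw [mul_assoc, ← mul_assoc (U v : Matrix (Fin 2) (Fin 2) ℂ), hv, one_mul]
    -- along any walk, A is antidiagonal or diagonal
    have hwalk : ∀ v w : V, G.Walk v w → Anti (A v w) ∨ Diag (A v w) := by
      intro v w p
      induction p with
      | nil => right; rw [hAself]; exact diag_one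
      | cons h q ih =>
        rename_i a b c
        have hab : Anti (A a b) := hAedge h
        have : A a c = A a b * A b c := (hAtrans a b c).symm
        rw [this]
        rcases ih with hq | hq
        · exact Or.inr (anti_mul_anti hab hq)
        · exact Or.inl (anti_mul_diag hab hq)
    -- define the colouring
    let root : V → V := fun v => (G.connectedComponentMk v).out
    have hreach : ∀ v, G.Reachable (root v) v := by
      intro v
      apply SimpleGraph.ConnectedComponent.exact
      exact (G.connectedComponentMk v).out_eq
    let f : V → Fin 2 := fun v => if A (root v) v 0 0 = 0 then 0 else 1
    have hclass : ∀ v, Anti (A (root v) v) ∨ Diag (A (root v) v) := by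
      intro v
      obtain ⟨p⟩ := hreach v
      exact hwalk _ _ p
    refine ⟨SimpleGraph.Coloring.mk f ?_⟩
    intro v w hadj hfeq
    have hroot : root v = root w := by
      simp only [root, SimpleGraph.ConnectedComponent.connectedComponentMk_eq_of_adj hadj]
    have hAvw : Anti (A v w) := hAedge hadj
    have hAconj : ∀ a b, (A a b)ᴴ = A b a := by
      intro a b
      simp only [hA, Matrix.conjTranspose_mul, Matrix.conjTranspose_conjTranspose]
    -- A v w = (A r v)ᴴ * (A r w) where r = root v = root w
    have hkey : A v w = (A (root v) v)ᴴ * (A (root v) w) := by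
      rw [hAconj, hAtrans]
    rcases hclass v with hv | hv <;> rcases (hroot ▸ hclass w : Anti (A (root v) w) ∨ Diag (A (root v) w)) with hw | hw
    · -- both anti : product is Diag, contradicting Anti (A v w)
      have : Diag (A v w) := hkey ▸ anti_mul_anti (anti_conjTranspose hv) hw
      exact this.2.2.1 hAvw.1
    · -- v anti, w diag : f v = 0, f w = 1
      have h1 : f v = 0 := by simp [f, hv.1]
      have h2 : f w = 1 := by
        have : A (root w) w 0 0 ≠ 0 := hroot ▸ hw.2.2.1
        simp [f, this]
      rw [h1, h2] at hfeq; exact absurd hfeq (by decide)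
    · have h1 : f v = 1 := by simp [f, hv.2.2.1]
      have h2 : f w = 0 := by
        have : A (root w) w 0 0 = 0 := hroot ▸ hw.1
        simp [f, this]
      rw [h1, h2] at hfeq; exact absurd hfeq (by decide)
    · -- both diag : product is Diag, contradiction
      have : Diag (A v w) := hkey ▸ diag_mul_diag (diag_conjTranspose hv) hw
      exact this.2.2.1 hAvw.1
  · rintro ⟨C⟩
    classical
    set X : Matrix (Fin 2) (Fin 2) ℂ := !![0, 1; 1, 0] with hXdef
    have hXH : Xᴴ = X := by
      ext i j
      fin_cases i <;> fin_cases j <;> simp [hXdef]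
    have hXX : X * X = 1 := by
      ext i j
      fin_cases i <;> fin_cases j <;> simp [hXdef, mul2, Matrix.one_apply]
    have hXmem : X ∈ Matrix.unitaryGroup (Fin 2) ℂ := by
      rw [Matrix.mem_unitaryGroup_iff, Matrix.star_eq_conjTranspose, hXH]
      exact hXX
    have hXdiag : ∀ α : Fin 2, X α α = 0 := by
      intro α; fin_cases α <;> simp [hXdef]
    refine ⟨fun v => if C v = 0 then 1 else ⟨X, hXmem⟩, ?_⟩
    intro v w hadj α
    have hne : C v ≠ C w := C.valid hadj
    have hcase : (C v = 0 ∧ C w = 1) ∨ (C v = 1 ∧ C w = 0) := by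
      revert hne; generalize C v = a; generalize C w = b; revert a b; decide
    rcases hcase with ⟨h1, h2⟩ | ⟨h1, h2⟩
    · simp [h1, h2, Matrix.conjTranspose_one, hXdiag α]
    · simp [h1, h2, hXH, hXdiag α]
end

section
/- Every classically c-colourable graph admits a rank-1 quantum c-colouring: if f is a proper c-colouring of G, then taking U_v to be F_c, the c×c discrete Fourier transform matrix, with rows cyclically shifted by f(v) (equivalently, using the vectors e_{vα} = row f(v)+α of F_c) satisfies the quantum colouring condition. Hence χ_q^(1)(G) ≤ χ(G). -/
open scoped RealInnerProductSpace

/-- The `c × c` discrete Fourier transform matrix, `(F_c)_{jk} = e^{2πijk/c}/√c`. -/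
noncomputable def Fmat (c : ℕ) (j k : Fin c) : ℂ :=
  Complex.exp (2 * Real.pi * Complex.I * (j : ℕ) * (k : ℕ) / c) / Real.sqrt c

/-- The vector `e_{vα}`: row `f(v) + α` of the Fourier matrix `F_c`. -/
noncomputable def evec {V : Type*} (c : ℕ) (f : V → Fin c) (v : V) (α : Fin c) :
    EuclideanSpace ℂ (Fin c) :=
  WithLp.toLp 2 (fun k => Fmat c (f v + α) k)

/-- Rank-1 quantum chromatic number in the orthonormal-basis formulation. -/
noncomputable def qcb {V : Type*} (G : SimpleGraph V) : ℕ :=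
  sInf {c | ∃ e : V → Fin c → EuclideanSpace ℂ (Fin c),
    (∀ v, Orthonormal ℂ (e v)) ∧
    ∀ v w, G.Adj v w → ∀ α, (inner ℂ (e v α) (e w α) : ℂ) = 0}

lemma inner_Fmat (c : ℕ) (hc : 0 < c) (a b : Fin c) :
    ∑ k : Fin c, (starRingEnd ℂ) (Fmat c a k) * Fmat c b k = if a = b then 1 else 0 := by
  have hc0 : (c : ℂ) ≠ 0 := Nat.cast_ne_zero.mpr hc.ne'
  have hsq : (Real.sqrt c : ℂ) * (Real.sqrt c : ℂ) = (c : ℂ) := by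
    norm_cast
    exact Real.mul_self_sqrt c.cast_nonneg
  set d : ℤ := (b : ℤ) - (a : ℤ) with hd
  set ζ : ℂ := Complex.exp (2 * Real.pi * Complex.I * d / c) with hζ
  have step : ∀ k : Fin c, (starRingEnd ℂ) (Fmat c a k) * Fmat c b k = ζ ^ (k : ℕ) / c := by
    intro k
    unfold Fmat
    rw [map_div₀, ← Complex.exp_conj]
    have h1 : (starRingEnd ℂ) (2 * Real.pi * Complex.I * (a : ℕ) * (k : ℕ) / c)
        = -(2 * Real.pi * Complex.I * (a : ℕ) * (k : ℕ) / c) := by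
      rw [map_div₀]
      push_cast
      simp only [map_mul, map_ofNat, Complex.conj_I, Complex.conj_ofReal, map_natCast]
      ring
    have harg : -(2 * Real.pi * Complex.I * (a : ℕ) * (k : ℕ) / c)
        + 2 * Real.pi * Complex.I * (b : ℕ) * (k : ℕ) / c
        = ((k : ℕ) : ℂ) * (2 * Real.pi * Complex.I * d / c) := by
      rw [hd]; push_cast; ring
    rw [h1, Complex.conj_ofReal, div_mul_div_comm, ← Complex.exp_add, harg,
      Complex.exp_nat_mul, hsq, hζ]
  rw [Finset.sum_congr rfl (fun k _ => step k), ← Finset.sum_div,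
    Fin.sum_univ_eq_sum_range (fun k => ζ ^ k)]
  by_cases hab : a = b
  · subst hab
    simp only [hd, sub_self, hζ, Int.cast_zero, mul_zero, zero_div, Complex.exp_zero,
      one_pow, Finset.sum_const, Finset.card_range, nsmul_eq_mul, mul_one, if_pos rfl]
    exact div_self hc0
  · rw [if_neg hab]
    have h2πI : (2 : ℂ) * Real.pi * Complex.I ≠ 0 := by
      simp [Real.pi_ne_zero, Complex.I_ne_zero]
    have hζ1 : ζ ≠ 1 := by
      rw [hζ, Ne, Complex.exp_eq_one_iff]
      rintro ⟨n, hn⟩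
      have h3 : (2 * Real.pi * Complex.I) * (d : ℂ) = (2 * Real.pi * Complex.I) * ((n : ℂ) * c) := by
        field_simp at hn
        linear_combination (2 * Real.pi * Complex.I) * hn
      have h4 : (d : ℂ) = (n : ℂ) * c := mul_left_cancel₀ h2πI h3
      have hdc : d = n * c := by exact_mod_cast h4
      have hda : d ≠ 0 := sub_ne_zero.mpr
        (fun h => hab (Fin.ext (by exact_mod_cast h.symm)))
      have ha' : (a : ℤ) < c := by exact_mod_cast a.isLt
      have hb' : (b : ℤ) < c := by exact_mod_cast b.isLt
      have ha0 : (0 : ℤ) ≤ (a : ℤ) := Int.natCast_nonneg _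
      have hb0 : (0 : ℤ) ≤ (b : ℤ) := Int.natCast_nonneg _
      have habs : |d| < c := by
        rw [abs_sub_lt_iff]
        omega
      rcases eq_or_ne n 0 with h0 | h0
      · rw [h0, zero_mul] at hdc
        exact hda hdc
      · have hle : (c : ℤ) ≤ |d| := by
          rw [hdc, abs_mul, abs_of_nonneg (Int.natCast_nonneg c)]
          nlinarith [Int.one_le_abs h0, Int.natCast_pos.mpr hc]
        linarith
    rw [geom_sum_eq hζ1, hζ, ← Complex.exp_nat_mul]
    have hone : Complex.exp ((c : ℕ) * (2 * Real.pi * Complex.I * d / c)) = 1 := by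
      rw [show ((c : ℕ) : ℂ) * (2 * Real.pi * Complex.I * d / c)
          = (d : ℂ) * (2 * Real.pi * Complex.I) by field_simp]
      exact Complex.exp_int_mul_two_pi_mul_I d
    rw [hone, sub_self, zero_div, zero_div]

lemma evec_good {V : Type*} (G : SimpleGraph V) (c : ℕ)
    (f : V → Fin c) (hf : ∀ v w, G.Adj v w → f v ≠ f w) :
    (∀ v, Orthonormal ℂ (evec c f v)) ∧
    (∀ v w, G.Adj v w → ∀ α, (inner ℂ (evec c f v α) (evec c f w α) : ℂ) = 0) := by
  rcases Nat.eq_zero_or_pos c with rfl | hc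
  · exact ⟨fun v => (f v).elim0, fun v w _ α => α.elim0⟩
  haveI : NeZero c := ⟨hc.ne'⟩
  have hinner : ∀ (v w : V) (α β : Fin c),
      (inner ℂ (evec c f v α) (evec c f w β) : ℂ) = if f v + α = f w + β then 1 else 0 := by
    intro v w α β
    rw [PiLp.inner_apply]
    simpa [evec, RCLike.inner_apply, mul_comm] using inner_Fmat c hc (f v + α) (f w + β)
  constructor
  · intro v
    rw [orthonormal_iff_ite]
    intro α β
    have := hinner v v α β
    simp only [add_right_inj] at this
    exact this
  · intro v w hvw α
    have := hinner v w α α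
    rw [if_neg (fun h => hf v w hvw (add_right_cancel h))] at this
    exact this

/-- A proper `c`-colouring `f` of `G` yields a rank-1 quantum `c`-colouring via the
discrete Fourier transform; hence `χ_q^(1)(G) ≤ χ(G)`. -/
theorem stmt2 {V : Type*} (G : SimpleGraph V) (c : ℕ) (hc : 0 < c)
    (f : V → Fin c) (hf : ∀ v w, G.Adj v w → f v ≠ f w) :
    (∀ v, Orthonormal ℂ (evec c f v)) ∧
    (∀ v w, G.Adj v w → ∀ α, (inner ℂ (evec c f v α) (evec c f w α) : ℂ) = 0) ∧
    (qcb G : ℕ∞) ≤ G.chromaticNumber := by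
  obtain ⟨h1, h2⟩ := evec_good G c f hf
  refine ⟨h1, h2, ?_⟩
  rw [SimpleGraph.chromaticNumber]
  refine le_iInf₂ fun n hn => ?_
  obtain ⟨C⟩ := hn
  have hg : ∀ v w, G.Adj v w → C v ≠ C w := fun v w h => C.valid h
  obtain ⟨g1, g2⟩ := evec_good G n C hg
  have hmem : n ∈ {m | ∃ e : V → Fin m → EuclideanSpace ℂ (Fin m),
      (∀ v, Orthonormal ℂ (e v)) ∧
      ∀ v w, G.Adj v w → ∀ α, (inner ℂ (e v α) (e w α) : ℂ) = 0} := ⟨evec n C, g1, g2⟩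
  exact_mod_cast Nat.cast_le.mpr (Nat.sInf_le hmem)
end

section
/- Let p be prime and G the orthogonality graph on vectors in ℂ^p whose entries are p-th roots of unity. The set of vectors x with x_1 = x_2 (first two coordinates equal) is an independent set in G of size p^{p-1}. -/
/-!
If `p` is prime, a vanishing sum `∑ ζ ^ aⱼ` of `p` powers of a primitive `p`-th root `ζ`
(exponents `aⱼ < p`) gives a rational polynomial `∑ X ^ aⱼ` of degree `< p` with root `ζ`,
hence a multiple of the cyclotomic polynomial `1 + X + ⋯ + X ^ (p - 1)`; evaluating at `1`
shows it is that polynomial, so the exponents are distinct. For `x, y` with `x₀ = x₁` and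
`y₀ = y₁` the entries of `x̄ ∘ y` are `p`-th roots of unity that are not all distinct, so
`⟨x, y⟩ ≠ 0`. The count is that of free choices of `p - 1` entries among `p` roots.
-/

open Polynomial

theorem IsPrimitiveRoot.injective_of_sum_pow_eq_zero {K ι : Type*} [Field K] [CharZero K]
    [Fintype ι] {p : ℕ} [Fact p.Prime] {ζ : K} (hζ : IsPrimitiveRoot ζ p)
    (hι : Fintype.card ι = p) {a : ι → ℕ} (ha : ∀ j, a j < p) (hsum : ∑ j, ζ ^ a j = 0) :
    Function.Injective a := by
  have hp := (Fact.out : p.Prime)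
  set f : ℚ[X] := ∑ j, X ^ a j with hf
  have hdvd : cyclotomic p ℚ ∣ f := by
    rw [cyclotomic_eq_minpoly_rat hζ hp.pos]
    exact minpoly.dvd ℚ ζ (by simpa [f] using hsum)
  have hdeg : f.natDegree ≤ (cyclotomic p ℚ).natDegree := by
    rw [natDegree_cyclotomic, Nat.totient_prime hp]
    exact natDegree_sum_le_of_forall_le _ _ fun j _ => by
      simpa using Nat.le_sub_one_of_lt (ha j)
  have hfC := eq_leadingCoeff_mul_of_monic_of_dvd_of_natDegree_le (cyclotomic.monic p ℚ) hdvd hdeg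
  have hlead : f.leadingCoeff = 1 := by
    have h1 := congrArg (eval 1) hfC
    rw [eval_mul, eval_C, eval_one_cyclotomic_prime, hf, eval_finsetSum] at h1
    simp only [eval_pow, eval_X, one_pow, Finset.sum_const, Finset.card_univ, hι,
      nsmul_eq_mul, mul_one] at h1
    exact (mul_eq_right₀ (Nat.cast_ne_zero.mpr hp.ne_zero)).mp h1.symm
  rw [hlead, map_one, one_mul] at hfC
  intro i i' hii'
  by_contra hne
  have hcoeff := congrArg (coeff · (a i)) hfC
  simp only [hf, finsetSum_coeff, coeff_X_pow, cyclotomic_prime, Finset.sum_ite_eq,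
    Finset.mem_range, ha i, if_true] at hcoeff
  rw [Finset.sum_boole, Nat.cast_eq_one] at hcoeff
  refine hcoeff.not_gt (Finset.one_lt_card.mpr ⟨i, ?_, i', ?_, hne⟩) <;> simp [hii']

theorem IsPrimitiveRoot.injective_of_sum_eq_zero_of_pow_eq_one {K ι : Type*} [Field K]
    [CharZero K] [Fintype ι] {p : ℕ} [Fact p.Prime] {ζ : K} (hζ : IsPrimitiveRoot ζ p)
    (hι : Fintype.card ι = p) {t : ι → K} (ht : ∀ j, t j ^ p = 1) (hsum : ∑ j, t j = 0) :
    Function.Injective t := by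
  choose a ha hζa using fun j => hζ.eq_pow_of_pow_eq_one (ht j)
  have ha_inj := hζ.injective_of_sum_pow_eq_zero hι ha (by simpa only [hζa] using hsum)
  intro i i' h
  exact ha_inj (hζ.pow_inj (ha i) (ha i') (by rw [hζa, hζa, h]))

def Equiv.setOfApplyEqApply {ι α : Type*} [DecidableEq ι] (R : Set α) {i i' : ι} (h : i ≠ i') :
    {x : ι → α | (∀ j, x j ∈ R) ∧ x i = x i'} ≃ ({j // j ≠ i'} → R) where
  toFun x j := ⟨x.1 j, x.2.1 j⟩
  invFun f := ⟨fun j => if hj : j = i' then f ⟨i, h⟩ else f ⟨j, hj⟩,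
    fun j => by dsimp only; split_ifs <;> exact Subtype.prop _, by simp [h]⟩
  left_inv := by
    rintro ⟨x, -, hx⟩
    ext j
    by_cases hj : j = i' <;> simp [hj, hx]
  right_inv f := by
    ext ⟨j, hj⟩
    simp [hj]

theorem ncard_setOf_forall_mem_and_apply_eq_apply {ι α : Type*} [Fintype ι] (R : Set α) {i i' : ι}
    (h : i ≠ i') :
    {x : ι → α | (∀ j, x j ∈ R) ∧ x i = x i'}.ncard = R.ncard ^ (Fintype.card ι - 1) := by
  classical
  rw [← Nat.card_coe_set_eq, Nat.card_congr (Equiv.setOfApplyEqApply R h), Nat.card_fun,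
    Nat.card_coe_set_eq, Nat.card_eq_fintype_card, Fintype.card_subtype_compl,
    Fintype.card_subtype_eq]

theorem Complex.ncard_setOf_pow_eq_one {n : ℕ} (hn : n ≠ 0) : {z : ℂ | z ^ n = 1}.ncard = n := by
  have hζ := Complex.isPrimitiveRoot_exp n hn
  have : NeZero n := ⟨hn⟩
  have hset : {z : ℂ | z ^ n = 1} = nthRootsFinset n (1 : ℂ) := by
    ext z
    simp [mem_nthRootsFinset (Nat.pos_of_ne_zero hn)]
  rw [hset, Set.ncard_coe_finset, hζ.card_nthRootsFinset]

/-- For `p` prime, in the orthogonality graph on vectors in `ℂ^p` with `p`-th root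
of unity entries, the set of vectors whose first two coordinates are equal is an
independent set of size `p^(p-1)`. -/
theorem stmt13 (p : ℕ) (hp : p.Prime) :
    ({x : Fin p → ℂ | (∀ j, x j ^ p = 1) ∧
        x ⟨0, hp.pos⟩ = x ⟨1, hp.one_lt⟩}).ncard = p ^ (p - 1) ∧
    ∀ x y : Fin p → ℂ,
      x ∈ {x : Fin p → ℂ | (∀ j, x j ^ p = 1) ∧ x ⟨0, hp.pos⟩ = x ⟨1, hp.one_lt⟩} →
      y ∈ {x : Fin p → ℂ | (∀ j, x j ^ p = 1) ∧ x ⟨0, hp.pos⟩ = x ⟨1, hp.one_lt⟩} →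
      ∑ j, (starRingEnd ℂ) (x j) * y j ≠ 0 := by
  have : Fact p.Prime := ⟨hp⟩
  have h01 : (⟨0, hp.pos⟩ : Fin p) ≠ ⟨1, hp.one_lt⟩ := by simp
  refine ⟨?_, ?_⟩
  · have h := ncard_setOf_forall_mem_and_apply_eq_apply {z : ℂ | z ^ p = 1} h01
    rwa [Complex.ncard_setOf_pow_eq_one hp.ne_zero, Fintype.card_fin] at h
  · rintro x y ⟨hx, hx01⟩ ⟨hy, hy01⟩ hsum
    have hroot j : ((starRingEnd ℂ) (x j) * y j) ^ p = 1 := by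
      rw [mul_pow, ← map_pow, hx, hy, map_one, one_mul]
    refine h01 ((Complex.isPrimitiveRoot_exp p hp.ne_zero).injective_of_sum_eq_zero_of_pow_eq_one
      (Fintype.card_fin p) hroot hsum ?_)
    simp only [hx01, hy01]
end

section
/- For any graph G, χ(G) ≤ (1 + 2√2)^{2ξ(G)}, where ξ(G) is the least dimension of a complex orthogonal representation of G. -/
/-!
Normalising an orthogonal representation in `ℂ^k` maps `G` homomorphically into the graph of
orthogonality on the unit sphere of `ℂ^k`, so it suffices to colour that graph. Take a maximal
`1/√2`-separated set `N` of the sphere and colour each unit vector by a point of `N` within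
distance `1/√2`. Two orthogonal unit vectors cannot share a colour: each would have real inner
product at least `3/4` with the common unit vector, while their sum has norm only `√2 < 3/2`.
Since `ℂ^k ≅ ℝ^{2k}`, a volume comparison of disjoint balls of radius `1/(2√2)` bounds `|N|` by
`(1 + 2√2)^{2k}`.
-/

/-- Orthogonal rank: least `c` such that `G` has an orthogonal representation in `ℂ^c`. -/
noncomputable def xi {V : Type*} (G : SimpleGraph V) : ℕ :=
  sInf {c | ∃ φ : V → EuclideanSpace ℂ (Fin c),
    (∀ v, φ v ≠ 0) ∧ ∀ v w, G.Adj v w → (inner ℂ (φ v) (φ w) : ℂ) = 0}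

open Metric MeasureTheory Module Set
open scoped NNReal ENNReal Finset

lemma Metric.IsSeparated.lt_dist {X : Type*} [PseudoMetricSpace X] {ε : ℝ≥0} {s : Set X}
    (hs : IsSeparated ε s) {x y : X} (hx : x ∈ s) (hy : y ∈ s) (hxy : x ≠ y) :
    ε < dist x y := by
  have : (ε : ℝ≥0∞) < edist x y := hs hx hy hxy
  rwa [edist_nndist, ENNReal.coe_lt_coe, ← NNReal.coe_lt_coe, coe_nndist] at this

lemma Metric.packingNumber_le_of_forall_finset {X : Type*} [PseudoEMetricSpace X] {ε : ℝ≥0}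
    {A : Set X} {M : ℕ}
    (h : ∀ s : Finset X, (s : Set X) ⊆ A → IsSeparated ε (s : Set X) → #s ≤ M) :
    packingNumber ε A ≤ M := by
  refine iSup₂_le fun C hCA => iSup_le fun hC => ?_
  by_contra! hlt
  obtain ⟨t, htC, ht⟩ := exists_subset_encard_eq (Order.add_one_le_of_lt hlt)
  have htfin : t.Finite := finite_of_encard_eq_coe ht
  have hle := h htfin.toFinset (by simpa using htC.trans hCA) (by simpa using hC.subset htC)
  have hcard : #htfin.toFinset = M + 1 := by
    rw [htfin.encard_eq_coe_toFinset_card] at ht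
    exact_mod_cast ht
  omega

section Packing

variable {E : Type*} [NormedAddCommGroup E] [NormedSpace ℝ E] [FiniteDimensional ℝ E]

theorem Finset.card_le_of_isSeparated_of_subset_closedBall {ε : ℝ≥0} (hε : 0 < ε)
    {s : Finset E} (hs : (s : Set E) ⊆ closedBall 0 1) (hsep : IsSeparated ε (s : Set E)) :
    (#s : ℝ) ≤ (1 + 2 / ε) ^ finrank ℝ E := by
  borelize E
  set μ : Measure E := Measure.addHaar
  have hδ : (0 : ℝ) < ε / 2 := by positivity
  have hR : (0 : ℝ) < 1 + ε / 2 := by positivity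
  have hdisj : (s : Set E).PairwiseDisjoint fun c => ball c (ε / 2) := fun c hc d hd hcd =>
    ball_disjoint_ball (by linarith [hsep.lt_dist hc hd hcd])
  have hsub : (⋃ c ∈ s, ball c (ε / 2 : ℝ)) ⊆ ball (0 : E) (1 + ε / 2) :=
    iUnion₂_subset fun c hc => ball_subset_ball' (by
      have := hs hc; rw [mem_closedBall] at this; linarith)
  have hvol : (#s : ℝ≥0∞) * ENNReal.ofReal ((ε / 2) ^ finrank ℝ E) * μ (ball 0 1) ≤
      ENNReal.ofReal ((1 + ε / 2) ^ finrank ℝ E) * μ (ball 0 1) := calc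
    (#s : ℝ≥0∞) * ENNReal.ofReal ((ε / 2) ^ finrank ℝ E) * μ (ball 0 1)
        = μ (⋃ c ∈ s, ball c (ε / 2 : ℝ)) := by
      rw [measure_biUnion_finset hdisj fun c _ => measurableSet_ball]
      simp only [μ.addHaar_ball_of_pos _ hδ, Finset.sum_const, nsmul_eq_mul, mul_assoc]
    _ ≤ μ (ball 0 (1 + ε / 2)) := measure_mono hsub
    _ = ENNReal.ofReal ((1 + ε / 2) ^ finrank ℝ E) * μ (ball 0 1) := μ.addHaar_ball_of_pos _ hR
  have hcard := ENNReal.toReal_le_of_le_ofReal (by positivity)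
    ((ENNReal.mul_le_mul_iff_left (measure_ball_pos _ _ zero_lt_one).ne'
      measure_ball_lt_top.ne).1 hvol)
  rw [ENNReal.toReal_mul, ENNReal.toReal_ofReal (by positivity), ENNReal.toReal_natCast,
    ← le_div_iff₀ (by positivity), ← div_pow] at hcard
  rwa [show ((1 + ε / 2) / (ε / 2) : ℝ) = 1 + 2 / ε by field_simp; ring] at hcard

theorem exists_finset_isCover_card_le_of_subset_closedBall {ε : ℝ≥0} (hε : 0 < ε) {A : Set E}
    (hA : A ⊆ closedBall 0 1) :
    ∃ N : Finset E, (N : Set E) ⊆ A ∧ IsCover ε A N ∧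
      (#N : ℝ) ≤ (1 + 2 / ε) ^ finrank ℝ E := by
  have hcard : ∀ s : Finset E, (s : Set E) ⊆ A → IsSeparated ε (s : Set E) →
      (#s : ℝ) ≤ (1 + 2 / ε) ^ finrank ℝ E := fun s hs hsep =>
    Finset.card_le_of_isSeparated_of_subset_closedBall hε (hs.trans hA) hsep
  have hpack : packingNumber ε A ≠ ⊤ :=
    ne_top_of_le_ne_top (ENat.natCast_ne_top ⌊(1 + 2 / (ε : ℝ)) ^ finrank ℝ E⌋₊)
      (packingNumber_le_of_forall_finset fun s hs hsep => Nat.le_floor (hcard s hs hsep))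
  have hfin : (maximalSeparatedSet ε A).Finite :=
    encard_ne_top_iff.1 (encard_maximalSeparatedSet hpack ▸ hpack)
  have hsub : (hfin.toFinset : Set E) ⊆ A := by simpa using maximalSeparatedSet_subset
  refine ⟨hfin.toFinset, hsub, ?_, hcard _ hsub ?_⟩
  · simpa using isCover_maximalSeparatedSet hpack
  · simpa using isSeparated_maximalSeparatedSet

end Packing

/-- The triangle inequality alone only gives `‖u - v‖ ≤ √2`, which orthogonal unit vectors
attain; it is the hypothesis `‖c‖ = 1` that excludes the equality case. -/
lemma inner_ne_zero_of_norm_sub_le {𝕜 E : Type*} [RCLike 𝕜] [NormedAddCommGroup E]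
    [InnerProductSpace 𝕜 E] {u v c : E} (hu : ‖u‖ = 1) (hv : ‖v‖ = 1) (hc : ‖c‖ = 1)
    (huc : ‖u - c‖ ≤ √2 / 2) (hvc : ‖v - c‖ ≤ √2 / 2) : inner 𝕜 u v ≠ 0 := by
  intro huv
  have hsq : (√2 / 2) ^ 2 = (1 / 2 : ℝ) := by rw [div_pow, Real.sq_sqrt zero_le_two]; norm_num
  have hre_u : 3 / 4 ≤ RCLike.re (inner 𝕜 u c) := by
    have := pow_le_pow_left₀ (norm_nonneg _) huc 2
    rw [@norm_sub_sq 𝕜, hu, hc, hsq] at this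
    linarith
  have hre_v : 3 / 4 ≤ RCLike.re (inner 𝕜 v c) := by
    have := pow_le_pow_left₀ (norm_nonneg _) hvc 2
    rw [@norm_sub_sq 𝕜, hv, hc, hsq] at this
    linarith
  have hsum : ‖u + v‖ ^ 2 = 2 := by
    rw [@norm_add_sq 𝕜, huv, hu, hv]; norm_num
  have hle : RCLike.re (inner 𝕜 (u + v) c) ≤ ‖u + v‖ := by
    simpa [hc] using re_inner_le_norm (𝕜 := 𝕜) (u + v) c
  rw [inner_add_left, map_add] at hle
  nlinarith [norm_nonneg (u + v)]

section OrthogonalityGraph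

variable (E : Type*) [NormedAddCommGroup E] [InnerProductSpace ℂ E]

def orthogonalityGraph : SimpleGraph (sphere (0 : E) 1) where
  Adj u v := inner ℂ (u : E) v = 0
  symm := ⟨fun _ _ => inner_eq_zero_symm.1⟩
  loopless := ⟨fun u h => by
    have := norm_eq_of_mem_sphere u
    simp_all⟩

theorem orthogonalityGraph_colorable [FiniteDimensional ℂ E] :
    ∃ n : ℕ, (orthogonalityGraph E).Colorable n ∧
      (n : ℝ) ≤ (1 + 2 * √2) ^ (2 * finrank ℂ E) := by
  set ε : ℝ≥0 := ⟨√2 / 2, by positivity⟩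
  have hεr : (ε : ℝ) = √2 / 2 := rfl
  have hε : 0 < ε := NNReal.coe_pos.1 (hεr ▸ by positivity)
  obtain ⟨N, hNsphere, hcover, hcard⟩ :=
    exists_finset_isCover_card_le_of_subset_closedBall hε (sphere_subset_closedBall (x := (0 : E)))
  choose c hcN hc using fun u : sphere (0 : E) 1 =>
    mem_iUnion₂.1 (isCover_iff_subset_iUnion_closedBall.1 hcover u.2)
  refine ⟨#N, ?_, ?_⟩
  · refine Fintype.card_coe N ▸ (SimpleGraph.Coloring.mk
      (fun u => (⟨c u, hcN u⟩ : N)) fun {u v} huv hcuv => ?_).colorable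
    have hcuv : c u = c v := congrArg Subtype.val hcuv
    refine inner_ne_zero_of_norm_sub_le (norm_eq_of_mem_sphere u) (norm_eq_of_mem_sphere v)
      (mem_sphere_zero_iff_norm.1 (hNsphere (hcN v))) ?_ ?_ huv
    · rw [← hcuv, ← dist_eq_norm]; exact hc u
    · rw [← dist_eq_norm]; exact hc v
  · have hconst : 1 + 2 / (ε : ℝ) = 1 + 2 * √2 := by
      rw [hεr]
      field_simp
      linear_combination -2 * Real.sq_sqrt (zero_le_two (α := ℝ))
    rwa [hconst, finrank_real_of_complex] at hcard

variable {E} in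
noncomputable def homOrthogonalityGraph {V : Type*} {G : SimpleGraph V} (φ : V → E)
    (hφ : ∀ v, φ v ≠ 0) (horth : ∀ v w, G.Adj v w → inner ℂ (φ v) (φ w) = 0) :
    G →g orthogonalityGraph E where
  toFun v := ⟨(‖φ v‖⁻¹ : ℂ) • φ v, by simp [norm_smul, hφ v]⟩
  map_rel' h := by simp [orthogonalityGraph, horth _ _ h]

end OrthogonalityGraph

theorem exists_orthogonalRepresentation_xi {V : Type*} [Fintype V] (G : SimpleGraph V) :
    ∃ φ : V → EuclideanSpace ℂ (Fin (xi G)),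
      (∀ v, φ v ≠ 0) ∧ ∀ v w, G.Adj v w → inner ℂ (φ v) (φ w) = 0 := by
  have hb : Orthonormal ℂ
      (EuclideanSpace.basisFun (Fin (Fintype.card V)) ℂ ∘ Fintype.equivFin V) :=
    (EuclideanSpace.basisFun _ ℂ).orthonormal.comp _ (Fintype.equivFin V).injective
  exact Nat.sInf_mem (s := {c | ∃ φ : V → EuclideanSpace ℂ (Fin c),
      (∀ v, φ v ≠ 0) ∧ ∀ v w, G.Adj v w → inner ℂ (φ v) (φ w) = 0})
    ⟨_, _, hb.ne_zero, fun v w h => hb.inner_eq_zero (G.ne_of_adj h)⟩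

/-- For any (finite) graph `G`, `χ(G) ≤ (1 + 2√2)^{2 ξ(G)}`. -/
theorem stmt17 {V : Type*} [Fintype V] (G : SimpleGraph V) :
    ∃ n : ℕ, G.Colorable n ∧ (n : ℝ) ≤ (1 + 2 * Real.sqrt 2) ^ (2 * xi G) := by
  obtain ⟨φ, hφ, horth⟩ := exists_orthogonalRepresentation_xi G
  obtain ⟨n, hn, hbound⟩ := orthogonalityGraph_colorable (EuclideanSpace ℂ (Fin (xi G)))
  refine ⟨n, hn.of_hom (homOrthogonalityGraph φ hφ horth), ?_⟩
  rwa [finrank_euclideanSpace_fin] at hbound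
end

section
/- If a graph G has an orthogonal representation by nonzero vectors in ℝ^c with c ≤ 4, then G has a rank-1 quantum 4-colouring (χ_q^(1)(G) ≤ 4). -/
/-!
Left multiplication by a unit quaternion `a` is an isometry of `ℍ ≅ ℝ⁴`, so `a, a i, a j, a k` is
an orthonormal basis; and right multiplication by a fixed unit quaternion `q` is an isometry too,
so `⟪a q, b q⟫ = ⟪a, b⟫`. Hence, after normalising, an orthogonal representation in `ℝ^c ⊆ ℍ`
gives each vertex the frame `(a, a i, a j, a k)`, and frames of adjacent vertices are orthogonal
colour by colour. Complexifying the coordinates keeps all inner products.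
-/

open Quaternion

section EuclideanLinearIsometry

variable {ι 𝕜 E : Type*} [Fintype ι] [RCLike 𝕜] [NormedAddCommGroup E] [InnerProductSpace 𝕜 E]

noncomputable def Orthonormal.euclideanLinearIsometry {w : ι → E} (hw : Orthonormal 𝕜 w) :
    EuclideanSpace 𝕜 ι →ₗᵢ[𝕜] E :=
  have hb : Orthonormal 𝕜 (EuclideanSpace.basisFun ι 𝕜).toBasis := by
    rw [OrthonormalBasis.coe_toBasis]
    exact (EuclideanSpace.basisFun ι 𝕜).orthonormal
  LinearMap.isometryOfOrthonormal ((EuclideanSpace.basisFun ι 𝕜).toBasis.constr 𝕜 w) hb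
    (by simpa only [Function.comp_def, Module.Basis.constr_basis] using hw)

end EuclideanLinearIsometry

namespace EuclideanSpace

variable {ι : Type*} [Fintype ι]

def complexify (x : EuclideanSpace ℝ ι) : EuclideanSpace ℂ ι :=
  WithLp.toLp 2 fun i => (x i : ℂ)

theorem inner_complexify (x y : EuclideanSpace ℝ ι) :
    inner ℂ (complexify x) (complexify y) = (inner ℝ x y : ℂ) := by
  simp [complexify, PiLp.inner_apply, mul_comm]

theorem _root_.Orthonormal.complexify {κ : Type*} [DecidableEq κ] {v : κ → EuclideanSpace ℝ ι}
    (hv : Orthonormal ℝ v) : Orthonormal ℂ fun k => complexify (v k) := by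
  rw [orthonormal_iff_ite] at hv ⊢
  intro i j
  rw [inner_complexify, hv]
  split_ifs <;> simp

end EuclideanSpace

namespace Quaternion

noncomputable def orthonormalBasisOneIJK : OrthonormalBasis (Fin 4) ℝ ℍ :=
  (EuclideanSpace.basisFun (Fin 4) ℝ).map linearIsometryEquivTuple.symm

theorem inner_mul_right_mul_right (a b q : ℍ) :
    inner ℝ (a * q) (b * q) = normSq q * inner ℝ a b := by
  rw [inner_def, inner_def, star_mul, mul_assoc, ← mul_assoc q, self_mul_star, coe_commutes,
    ← mul_assoc, mul_coe_eq_smul, re_smul, smul_eq_mul]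

theorem inner_mul_left_mul_left (a q r : ℍ) :
    inner ℝ (a * q) (a * r) = normSq a * inner ℝ q r := by
  simp only [inner_def, normSq_def', star_mul, re_mul, imI_mul, imJ_mul, imK_mul, re_star,
    imI_star, imJ_star, imK_star]
  ring

theorem inner_mul_right_of_norm_eq_one {q : ℍ} (hq : ‖q‖ = 1) (a b : ℍ) :
    inner ℝ (a * q) (b * q) = inner ℝ a b := by
  rw [inner_mul_right_mul_right, normSq_eq_norm_mul_self, hq, one_mul, one_mul]

theorem orthonormal_mul_left {ι : Type*} {q : ι → ℍ} (hq : Orthonormal ℝ q) {a : ℍ}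
    (ha : ‖a‖ = 1) : Orthonormal ℝ fun i => a * q i := by
  classical
  rw [orthonormal_iff_ite] at hq ⊢
  intro i j
  rw [inner_mul_left_mul_left, normSq_eq_norm_mul_self, ha, one_mul, one_mul, hq]

end Quaternion

def SimpleGraph.HasRankOneQuantumColouring {V : Type*} (G : SimpleGraph V) (n : ℕ) : Prop :=
  ∃ e : V → Fin n → EuclideanSpace ℂ (Fin n),
    (∀ v, Orthonormal ℂ (e v)) ∧ ∀ v w, G.Adj v w → ∀ α, inner ℂ (e v α) (e w α) = 0

theorem SimpleGraph.hasRankOneQuantumColouring_four_of_quaternion_representation {V : Type*}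
    (G : SimpleGraph V) (u : V → ℍ) (hu : ∀ v, u v ≠ 0)
    (horth : ∀ v w, G.Adj v w → inner ℝ (u v) (u w) = 0) :
    G.HasRankOneQuantumColouring 4 := by
  let b := orthonormalBasisOneIJK
  let a : V → ℍ := fun v => ‖u v‖⁻¹ • u v
  have ha : ∀ v, ‖a v‖ = 1 := fun v => norm_smul_inv_norm (hu v)
  refine ⟨fun v α => EuclideanSpace.complexify (linearIsometryEquivTuple (a v * b α)),
    fun v => ?_, fun v w hvw α => ?_⟩
  · exact ((orthonormal_mul_left b.orthonormal (ha v)).comp_linearIsometryEquiv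
      linearIsometryEquivTuple).complexify
  · rw [EuclideanSpace.inner_complexify, LinearIsometryEquiv.inner_map_map,
      inner_mul_right_of_norm_eq_one (b.norm_eq_one α), real_inner_smul_left,
      real_inner_smul_right, horth v w hvw, mul_zero, mul_zero, Complex.ofReal_zero]

/-- A graph with an orthogonal representation in `ℝ^c`, `c ≤ 4`, has a rank-1
quantum 4-colouring: `χ_q^(1)(G) ≤ 4`. -/
theorem stmt19 {V : Type*} (G : SimpleGraph V) (c : ℕ) (hc : c ≤ 4)
    (φ : V → EuclideanSpace ℝ (Fin c)) (hnz : ∀ v, φ v ≠ 0)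
    (horth : ∀ v w, G.Adj v w → (inner ℝ (φ v) (φ w) : ℝ) = 0) :
    ∃ e : V → Fin 4 → EuclideanSpace ℂ (Fin 4),
      (∀ v, Orthonormal ℂ (e v)) ∧
      ∀ v w, G.Adj v w → ∀ α, (inner ℂ (e v α) (e w α) : ℂ) = 0 := by
  let ι : EuclideanSpace ℝ (Fin c) →ₗᵢ[ℝ] ℍ :=
    (orthonormalBasisOneIJK.orthonormal.comp _ (Fin.castLE_injective hc)).euclideanLinearIsometry
  refine G.hasRankOneQuantumColouring_four_of_quaternion_representation (ι ∘ φ)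
    (fun v => (map_ne_zero_iff ι ι.injective).2 (hnz v)) (fun v w hvw => ?_)
  rw [Function.comp_apply, Function.comp_apply, ι.inner_map_map, horth v w hvw]
end
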